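/- arXiv:2002.01904 — 3 statements merged into one kernel-verified Lean document; each statement's English description precedes it below -/
import Mathlib

section
/- Let r ≥ 3 be an odd integer and let i be an even natural number with 0 < i ≤ r−2. Then ∑_{j ∈ I_r} [j+1] · [(i+1)(j+1)] = 0, where the sum ranges over all even natural numbers j ≤ r−2 and [n] = sin(2πn/r)/sin(2π/r). Equivalently, an i-colored strand encircled by a 0-framed Kirby-colored unknot gives the zero skein unless i = 0: ∑_{j ∈ I_r} Δ_j H(i,j) = 0 for i ∈ I_r, i ≠ 0, where Δ_j = (−1)^{j+1}[j+1] and H(i,j) = (−1)^{i+j}[(i+1)(j+1)]. -/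
/-!
By product-to-sum, `[k]·[(i+1)k] = (cos (2πik/r) - cos (2π(i+2)k/r)) / (2 sin² (2π/r))`, so it
suffices that `∑_{j ∈ I_r} cos (2πm(j+1)/r) = -1/2` whenever `r ∤ m`; this applies to `m = i` and to
`m = i + 2`, the latter because `i` is even and `r` odd. With `x = 2πm/r`, the sum of `cos ((2t+1)x)`
over `t < (r-1)/2` telescopes after multiplication by `2 sin x` to `sin ((r-1)x) = -sin x`, and
`sin x ≠ 0` as `r ∤ 2m`. In `Δ_j H(i,j)` the signs multiply to `(-1)^(i+1)`, independent of `j`.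
-/

open Real Finset

/-- The quantum integer `[n] = sin(2πn/r)/sin(2π/r)` at `q = exp(2πi/r)`. -/
noncomputable def qint (r n : ℕ) : ℝ :=
  Real.sin (2 * Real.pi * n / r) / Real.sin (2 * Real.pi / r)

/-- `I_r`: the set of even natural numbers at most `r − 2`. -/
def Ir (r : ℕ) : Finset ℕ := (Finset.range (r - 1)).filter (fun i => Even i)

/-- `Δ_j = (−1)^{j+1}[j+1]`, the value of the unknot colored `j`. -/
noncomputable def Del (r j : ℕ) : ℝ := (-1 : ℝ) ^ (j + 1) * qint r (j + 1)

/-- `H(i,j) = (−1)^{i+j}[(i+1)(j+1)]`, the Kauffman bracket of the 0-framed Hopf link. -/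
noncomputable def Hopf (r i j : ℕ) : ℝ := (-1 : ℝ) ^ (i + j) * qint r ((i + 1) * (j + 1))

theorem Ir_eq_image_range (r : ℕ) : Ir r = (range (r / 2)).image (2 * ·) := by
  ext j
  simp only [Ir, mem_filter, mem_range, mem_image, Nat.even_iff]
  constructor
  · rintro ⟨hj, hev⟩
    exact ⟨j / 2, by omega, by omega⟩
  · rintro ⟨t, ht, rfl⟩
    omega

theorem two_mul_sin_mul_sum_range_cos_odd_mul (x : ℝ) (N : ℕ) :
    2 * sin x * ∑ t ∈ range N, cos ((2 * t + 1) * x) = sin (2 * N * x) := by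
  induction N with
  | zero => simp
  | succ N ih =>
    rw [sum_range_succ, mul_add, ih, two_mul_sin_mul_cos,
      show x - (2 * N + 1) * x = -(2 * N * x) by ring, sin_neg]
    push_cast
    ring_nf

theorem sin_two_pi_mul_div_ne_zero {r m : ℕ} (hodd : Odd r) (hm : ¬ r ∣ m) :
    sin (2 * π * m / r) ≠ 0 := by
  rw [Ne, sin_eq_zero_iff]
  rintro ⟨n, hn⟩
  have hr : (r : ℝ) ≠ 0 := by exact_mod_cast hodd.pos.ne'
  have hnr : n * r = ((2 * m : ℕ) : ℤ) := by
    have : (n : ℝ) * r = 2 * m := by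
      field_simp at hn
      linarith [pi_pos]
    exact_mod_cast this
  have : r ∣ 2 * m := Int.natCast_dvd_natCast.mp ⟨n, by rw [← hnr, mul_comm]⟩
  exact hm (hodd.coprime_two_right.dvd_of_dvd_mul_left this)

theorem sum_Ir_cos_two_pi_mul {r m : ℕ} (hodd : Odd r) (hm : ¬ r ∣ m) :
    ∑ j ∈ Ir r, cos (2 * π * m * (j + 1 : ℕ) / r) = -(1 / 2) := by
  set x := 2 * π * m / r
  have hsum : ∑ j ∈ Ir r, cos (2 * π * m * (j + 1 : ℕ) / r) =
      ∑ t ∈ range (r / 2), cos ((2 * t + 1) * x) := by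
    rw [Ir_eq_image_range, sum_image (by intro a _ b _ h; simpa using h)]
    refine sum_congr rfl fun t _ => ?_
    simp only [x]
    push_cast
    ring_nf
  obtain ⟨k, rfl⟩ := hodd
  have hend : sin (2 * ((2 * k + 1) / 2 : ℕ) * x) = -sin x := by
    rw [show (2 * k + 1) / 2 = k by omega, ← sin_nat_mul_two_pi_sub x m]
    congr 1
    simp only [x]
    field_simp
    push_cast
    ring
  have hx := sin_two_pi_mul_div_ne_zero ⟨k, rfl⟩ hm
  rw [hsum]
  apply mul_left_cancel₀ (mul_ne_zero two_ne_zero hx)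
  rw [two_mul_sin_mul_sum_range_cos_odd_mul, hend]
  ring

theorem qint_mul_qint_succ_mul (r i k : ℕ) :
    qint r k * qint r ((i + 1) * k) =
      (cos (2 * π * i * k / r) - cos (2 * π * (i + 2 : ℕ) * k / r)) / (2 * sin (2 * π / r) ^ 2) := by
  have h := two_mul_sin_mul_sin (2 * π * k / r) (2 * π * ((i + 1) * k : ℕ) / r)
  rw [show 2 * π * k / r - 2 * π * ((i + 1) * k : ℕ) / r = -(2 * π * i * k / r) by push_cast; ring,
    cos_neg, show 2 * π * k / r + 2 * π * ((i + 1) * k : ℕ) / r = 2 * π * (i + 2 : ℕ) * k / r by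
      push_cast; ring] at h
  rw [qint, qint, ← h]
  ring

theorem Del_mul_Hopf (r i j : ℕ) :
    Del r j * Hopf r i j = (-1) ^ (i + 1) * (qint r (j + 1) * qint r ((i + 1) * (j + 1))) := by
  have hsign : (-1 : ℝ) ^ (j + 1) * (-1) ^ (i + j) = (-1) ^ (i + 1) := by
    rw [← pow_add, show j + 1 + (i + j) = i + 1 + 2 * j by ring, pow_add, pow_mul]
    norm_num
  rw [Del, Hopf, ← hsign]
  ring

theorem encirclement_vanishing_general (r : ℕ) (hodd : Odd r)
    (i : ℕ) (hi : Even i) (hipos : 0 < i) (hile : i ≤ r - 2) :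
    (∑ j ∈ Ir r, qint r (j + 1) * qint r ((i + 1) * (j + 1))) = 0 ∧
    (∑ j ∈ Ir r, Del r j * Hopf r i j) = 0 := by
  have hi_r : ¬ r ∣ i := Nat.not_dvd_of_pos_of_lt hipos (by omega)
  have hi2_r : ¬ r ∣ i + 2 := by
    intro h
    have := Nat.le_of_dvd (by omega) h
    obtain ⟨t, rfl⟩ := hi
    obtain ⟨k, rfl⟩ := hodd
    omega
  have hsum : ∑ j ∈ Ir r, qint r (j + 1) * qint r ((i + 1) * (j + 1)) = 0 := by
    simp_rw [qint_mul_qint_succ_mul, ← sum_div, sum_sub_distrib,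
      sum_Ir_cos_two_pi_mul hodd hi_r, sum_Ir_cos_two_pi_mul hodd hi2_r, sub_self, zero_div]
  refine ⟨hsum, ?_⟩
  simp_rw [Del_mul_Hopf, ← mul_sum, hsum, mul_zero]

/-- for odd `r ≥ 3` and an even `i` with `0 < i ≤ r − 2`,
`∑_{j ∈ I_r} [j+1]·[(i+1)(j+1)] = 0`; equivalently the encirclement identity
`∑_{j ∈ I_r} Δ_j H(i,j) = 0` holds for `i ∈ I_r`, `i ≠ 0`. -/
theorem encirclement_vanishing (r : ℕ) (hr : 3 ≤ r) (hodd : Odd r)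
    (i : ℕ) (hi : Even i) (hipos : 0 < i) (hile : i ≤ r - 2) :
    (∑ j ∈ Ir r, qint r (j + 1) * qint r ((i + 1) * (j + 1))) = 0 ∧
    (∑ j ∈ Ir r, Del r j * Hopf r i j) = 0 :=
  encirclement_vanishing_general r hodd i hi hipos hile
end

section
/- Let r ≥ 3 be an odd integer. For all even natural numbers i, k with i, k ≤ r−2, the Hopf-link pairing satisfies the orthogonality relation ∑_{j ∈ I_r} [(i+1)(j+1)] · [(k+1)(j+1)] = (r/(4 sin²(2π/r))) · δ_{i,k}, where the sum ranges over all even natural numbers j ≤ r−2, [n] = sin(2πn/r)/sin(2π/r), and δ_{i,k} equals 1 if i = k and 0 otherwise. -/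
/-!
With `θ = 2π/r`, the summand is `sin((i+1)(j+1)θ) sin((k+1)(j+1)θ) / sin² θ`. As `r` is odd, the
numbers `j + 1` (`j ∈ I_r`) are the odd residues in `(0, r)`, and `m ↦ r - m` sends them onto the
even ones; the product of sines is invariant under this reflection, so the sum over `I_r` is half
the sum over all residues mod `r`. Product-to-sum turns the latter into two cosine sums over a full
period, which equal `r` or `0` according to whether `r` divides `i - k` resp. `i + k + 2`. The size
bounds leave only `i = k` in the first case, and parity rules out `r ∣ i + k + 2`.
-/

open Real Finset

lemma sum_range_cos_two_pi_mul_div {r : ℕ} (hr : r ≠ 0) (c : ℤ) :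
    ∑ m ∈ range r, cos (2 * π * c * m / r) = if (r : ℤ) ∣ c then (r : ℝ) else 0 := by
  split_ifs with hdvd
  · obtain ⟨t, rfl⟩ := hdvd
    have hterm (m : ℕ) : cos (2 * π * ((r * t : ℤ) : ℝ) * m / r) = 1 := by
      rw [← cos_int_mul_two_pi (t * m)]
      push_cast
      congr 1
      field_simp
    simp only [sum_congr rfl fun m _ => hterm m, sum_const, card_range, nsmul_one]
  · have hsin : sin (2 * π * c / r / 2) ≠ 0 := by
      rw [Ne, sin_eq_zero_iff]
      rintro ⟨n, hn⟩
      refine hdvd ⟨n, ?_⟩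
      field_simp at hn
      exact_mod_cast hn.symm.trans (mul_comm _ _)
    -- `sin (a/2) * ∑ cos (a m)` telescopes to a multiple of `sin (r a/2) = sin (π c) = 0`.
    have htel := sin_mul_sum_cos r (2 * π * c / r) 0
    have hrhs : sin (r * (2 * π * c / r) / 2) = 0 := by
      rw [← sin_int_mul_pi c]
      congr 1
      field_simp
    rw [hrhs, zero_mul] at htel
    simpa [mul_comm, mul_div_assoc] using (mul_eq_zero.mp htel).resolve_left hsin

lemma sum_range_sin_mul_sin {r : ℕ} (hr : r ≠ 0) (a b : ℤ) :
    ∑ m ∈ range r, sin (2 * π * a * m / r) * sin (2 * π * b * m / r) =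
      ((if (r : ℤ) ∣ a - b then (r : ℝ) else 0) - if (r : ℤ) ∣ a + b then (r : ℝ) else 0) / 2 := by
  have hterm (m : ℕ) : sin (2 * π * a * m / r) * sin (2 * π * b * m / r) =
      (cos (2 * π * ↑(a - b) * m / r) - cos (2 * π * ↑(a + b) * m / r)) / 2 := by
    have hsub : 2 * π * ↑(a - b) * m / r = 2 * π * a * m / r - 2 * π * b * m / r := by
      push_cast; ring
    have hadd : 2 * π * ↑(a + b) * m / r = 2 * π * a * m / r + 2 * π * b * m / r := by
      push_cast; ring
    rw [hsub, hadd, cos_sub, cos_add]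
    ring
  rw [sum_congr rfl fun m _ => hterm m, ← sum_div, sum_sub_distrib,
    sum_range_cos_two_pi_mul_div hr, sum_range_cos_two_pi_mul_div hr]

lemma sin_two_pi_mul_sub_div {r : ℕ} (hr : r ≠ 0) (a : ℤ) (x : ℝ) :
    sin (2 * π * a * (r - x) / r) = -sin (2 * π * a * x / r) := by
  rw [← sin_int_mul_two_pi_sub _ a]
  congr 1
  field_simp

lemma sum_range_eq_two_nsmul_sum_Ir {M : Type*} [AddCommMonoid M] {r : ℕ} (hr : Odd r)
    {f : ℕ → M} (hf0 : f 0 = 0) (hf : ∀ n, 0 < n → n < r → f (r - n) = f n) :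
    ∑ m ∈ range r, f m = 2 • ∑ j ∈ Ir r, f (j + 1) := by
  obtain ⟨s, rfl⟩ := hr
  have hIr : Ir (2 * s + 1) = (range (2 * s)).filter Even := by simp [Ir]
  have hreflect : ∑ j ∈ (range (2 * s)).filter (¬ Even ·), f (j + 1) =
      ∑ j ∈ (range (2 * s)).filter Even, f (j + 1) := by
    refine sum_nbij' (fun j => 2 * s - 1 - j) (fun j => 2 * s - 1 - j) ?_ ?_ ?_ ?_ ?_ <;>
      simp only [mem_filter, mem_range, Nat.even_iff] <;> intro j hj
    any_goals omega
    rw [show 2 * s - 1 - j + 1 = 2 * s + 1 - (j + 1) by omega, hf _ (by omega) (by omega)]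
  rw [sum_range_succ', hf0, add_zero, hIr, ← sum_filter_add_sum_filter_not _ Even, hreflect,
    two_nsmul]

lemma sum_Ir_sin_mul_sin {r : ℕ} (hr : Odd r) (a b : ℤ) :
    ∑ j ∈ Ir r, sin (2 * π * a * (j + 1 : ℕ) / r) * sin (2 * π * b * (j + 1 : ℕ) / r) =
      ((if (r : ℤ) ∣ a - b then (r : ℝ) else 0) - if (r : ℤ) ∣ a + b then (r : ℝ) else 0) / 4 := by
  have hr0 : r ≠ 0 := by rintro rfl; simp at hr
  have hfold := sum_range_eq_two_nsmul_sum_Ir hr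
    (f := fun m => sin (2 * π * a * m / r) * sin (2 * π * b * m / r)) (by simp) fun n _ hn => by
      simp only [Nat.cast_sub hn.le, sin_two_pi_mul_sub_div hr0, neg_mul_neg]
  rw [sum_range_sin_mul_sin hr0, nsmul_eq_mul] at hfold
  linarith

lemma dvd_succ_sub_succ_iff_eq {r i k : ℕ} (hi : i < r) (hk : k < r) :
    (r : ℤ) ∣ (i + 1 : ℤ) - (k + 1) ↔ i = k := by
  refine ⟨fun h => ?_, by rintro rfl; simp⟩
  have := Int.eq_zero_of_abs_lt_dvd h (by rw [abs_lt]; omega)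
  omega

lemma not_dvd_succ_add_succ {r i k : ℕ} (hr : Odd r) (hi : Even i) (hir : i + 2 ≤ r) (hk : Even k)
    (hkr : k + 2 ≤ r) : ¬ (r : ℤ) ∣ (i + 1 : ℤ) + (k + 1) := by
  rintro ⟨t, ht⟩
  have hr0 : (0 : ℤ) < r := by have := hr.pos; omega
  have ht0 : 0 < t := pos_of_mul_pos_right (by omega : (0 : ℤ) < r * t) hr0.le
  have ht2 : t < 2 := lt_of_mul_lt_mul_left (by omega : (r : ℤ) * t < r * 2) hr0.le
  obtain rfl : t = 1 := by omega
  rw [Nat.odd_iff] at hr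
  rw [Nat.even_iff] at hi hk
  omega

lemma sin_two_pi_div_ne_zero {r : ℕ} (hr : 3 ≤ r) : sin (2 * π / r) ≠ 0 := by
  have hr' : (3 : ℝ) ≤ r := by exact_mod_cast hr
  refine (sin_pos_of_pos_of_lt_pi (by positivity) ?_).ne'
  rw [div_lt_iff₀ (by positivity)]
  nlinarith [pi_pos]

/-- for odd `r ≥ 3` and even `i, k ≤ r − 2`, the Hopf-link pairing is
orthogonal: `∑_{j ∈ I_r} [(i+1)(j+1)]·[(k+1)(j+1)] = (r/(4 sin²(2π/r)))·δ_{i,k}`. -/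
theorem hopf_pairing_orthogonality (r : ℕ) (hr : 3 ≤ r) (hodd : Odd r)
    (i k : ℕ) (hi : Even i) (hile : i ≤ r - 2) (hk : Even k) (hkle : k ≤ r - 2) :
    (∑ j ∈ Ir r, qint r ((i + 1) * (j + 1)) * qint r ((k + 1) * (j + 1))) =
      if i = k then r / (4 * Real.sin (2 * Real.pi / r) ^ 2) else 0 := by
  have hterm (j : ℕ) : qint r ((i + 1) * (j + 1)) * qint r ((k + 1) * (j + 1)) =
      sin (2 * π * (i + 1 : ℤ) * (j + 1 : ℕ) / r) * sin (2 * π * (k + 1 : ℤ) * (j + 1 : ℕ) / r) /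
        sin (2 * π / r) ^ 2 := by
    simp only [qint]
    push_cast
    ring_nf
  rw [sum_congr rfl fun j _ => hterm j, ← sum_div, sum_Ir_sin_mul_sin hodd,
    if_neg (not_dvd_succ_add_succ hodd hi (by omega) hk (by omega))]
  simp only [dvd_succ_sub_succ_iff_eq (by omega : i < r) (by omega : k < r)]
  split_ifs
  · rw [sub_zero]
    field_simp [sin_two_pi_div_ne_zero hr]
  · simp
end

section
/- Let r ≥ 3 be an odd integer and let j be a natural number with 0 ≤ j ≤ r−2. Then (−1)^j · sin(π(j+1)(r+1)/r) = −sin(π(j+1)/r); consequently (−1)^j · [((r+1)/2)(j+1)] = −sin(π(j+1)/r)/sin(2π/r) < 0, i.e., the Hopf-link pairing H((r−1)/2, j) = (−1)^{(r−1)/2 + j}[((r+1)/2)(j+1)] has, up to the fixed global sign (−1)^{(r−1)/2}, constant strictly negative sign as j ranges over 0,…,r−2. -/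
open Real

/-! Since `π(j+1)(r+1)/r = π(j+1)/r + (j+1)π`, the sign `(-1)^j` is cancelled by the shift by
`(j+1)π` up to one extra `-1`; and for odd `r` the colour `(r+1)/2` turns `[((r+1)/2)(j+1)]`
into exactly that sine divided by `sin(2π/r) > 0`. -/

theorem neg_one_pow_mul_sin_pi_mul_succ_mul_add_one_div {x : ℝ} (hx : x ≠ 0) (j : ℕ) :
    (-1 : ℝ) ^ j * sin (π * (j + 1) * (x + 1) / x) = -sin (π * (j + 1) / x) := by
  have hangle : π * (j + 1) * (x + 1) / x = π * (j + 1) / x + (j + 1 : ℕ) * π := by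
    push_cast
    field_simp
    ring
  rw [hangle, sin_add_nat_mul_pi, ← mul_assoc, ← pow_add, Odd.neg_one_pow ⟨j, by ring⟩,
    neg_one_mul]

theorem qint_half_succ_mul {r : ℕ} (hodd : Odd r) (n : ℕ) :
    qint r ((r + 1) / 2 * n) = sin (π * n * (r + 1) / r) / sin (2 * π / r) := by
  have hhalf : (((r + 1) / 2 : ℕ) : ℝ) * 2 = r + 1 := by
    exact_mod_cast Nat.div_mul_cancel hodd.add_one.two_dvd
  have hangle : 2 * π * (((r + 1) / 2 * n : ℕ) : ℝ) = π * n * (r + 1) := by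
    rw [Nat.cast_mul, ← hhalf]
    ring
  rw [qint, hangle]

theorem sin_pi_mul_div_pos {a b : ℝ} (ha : 0 < a) (hab : a < b) : 0 < sin (π * a / b) := by
  apply sin_pos_of_pos_of_lt_pi
  · exact div_pos (mul_pos pi_pos ha) (ha.trans hab)
  · rw [div_lt_iff₀ (ha.trans hab)]
    exact mul_lt_mul_of_pos_left hab pi_pos

/-- for odd `r ≥ 3` and `0 ≤ j ≤ r − 2`,
`(−1)^j sin(π(j+1)(r+1)/r) = −sin(π(j+1)/r)`; consequently
`(−1)^j [((r+1)/2)(j+1)] = −sin(π(j+1)/r)/sin(2π/r) < 0`: the Hopf-link pairing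
`H((r−1)/2, j)` has, up to the fixed global sign `(−1)^{(r−1)/2}`, constant strictly
negative sign as `j` ranges over `0,…,r−2`. -/
theorem hopf_pairing_sign_neg (r : ℕ) (hr : 3 ≤ r) (hodd : Odd r)
    (j : ℕ) (hj : j ≤ r - 2) :
    (-1 : ℝ) ^ j * Real.sin (Real.pi * (j + 1) * (r + 1) / r) =
        -Real.sin (Real.pi * (j + 1) / r) ∧
    (-1 : ℝ) ^ j * qint r (((r + 1) / 2) * (j + 1)) =
        -Real.sin (Real.pi * (j + 1) / r) / Real.sin (2 * Real.pi / r) ∧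
    (-1 : ℝ) ^ j * qint r (((r + 1) / 2) * (j + 1)) < 0 := by
  have hsign := neg_one_pow_mul_sin_pi_mul_succ_mul_add_one_div (x := (r : ℝ)) (by positivity) j
  have hqint : (-1 : ℝ) ^ j * qint r (((r + 1) / 2) * (j + 1)) =
      -sin (π * (j + 1) / r) / sin (2 * π / r) := by
    rw [qint_half_succ_mul hodd, Nat.cast_succ, mul_div_assoc', hsign]
  refine ⟨hsign, hqint, ?_⟩
  have hnum : 0 < sin (π * (j + 1) / r) :=
    sin_pi_mul_div_pos (by positivity) (by exact_mod_cast (by omega : j + 1 < r))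
  have hden : 0 < sin (2 * π / r) := by
    rw [mul_comm 2 π]
    exact sin_pi_mul_div_pos two_pos (by exact_mod_cast (by omega : 2 < r))
  rw [hqint, neg_div, neg_lt_zero]
  exact div_pos hnum hden
end
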